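/- arXiv:math/0404135 — 2 statements merged into one kernel-verified Lean document; each statement's English description precedes it below -/
import Mathlib

section
/- Fix integers n ≥ 1 and a ≥ 2, and let Λ be the rank-6 integral lattice with Gram matrix G as in Figure 6: basis w_1,...,w_6 with w_1·w_1 = −(n+1), w_2·w_2 = w_3·w_3 = w_4·w_4 = w_6·w_6 = −2, w_5·w_5 = −a, w_1·w_2 = w_2·w_3 = w_3·w_4 = w_4·w_5 = w_3·w_6 = 1, and all other pairings between distinct basis vectors equal to 0. Then for no m ∈ ℕ does there exist a linear map φ : ℤ^6 → ℤ^m satisfying (φx)·(φy) = −xᵀ G y for all x, y (dot product the standard one on ℤ^m); equivalently, Λ admits no isometric embedding into the diagonal lattice ⊕_m ⟨−1⟩. -/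
open Matrix

private lemma sum_mul_pair {m : ℕ} {i j : Fin m} (hij : i ≠ j) (x y : Fin m → ℤ)
    (h : ∀ k, k ≠ i → k ≠ j → x k * y k = 0) :
    ∑ k, x k * y k = x i * y i + x j * y j := by
  have hsub : ∑ k ∈ ({i, j} : Finset (Fin m)), x k * y k = ∑ k, x k * y k := by
    apply Finset.sum_subset (Finset.subset_univ _)
    intro k _ hk
    simp only [Finset.mem_insert, Finset.mem_singleton, not_or] at hk
    exact h k hk.1 hk.2
  rw [← hsub, Finset.sum_pair hij]

private lemma no_sq_two (z : ℤ) : z * z ≠ 2 := by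
  intro hz
  have h1 : z ≤ 1 := by nlinarith [sq_nonneg (z - 1)]
  have h2 : -1 ≤ z := by nlinarith [sq_nonneg (z + 1)]
  interval_cases z <;> omega

private lemma norm_two_struct {m : ℕ} (x : Fin m → ℤ) (h : ∑ k, x k * x k = 2) :
    ∃ i j, i ≠ j ∧ x i * x i = 1 ∧ x j * x j = 1 ∧ ∀ k, k ≠ i → k ≠ j → x k = 0 := by
  classical
  set S := Finset.univ.filter (fun k => x k ≠ 0) with hSdef
  have hmem : ∀ k, k ∈ S ↔ x k ≠ 0 := by intro k; simp [hSdef]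
  have hsum : ∑ k ∈ S, x k * x k = 2 := by
    rw [← h]
    apply Finset.sum_subset (Finset.subset_univ S)
    intro k _ hk
    rw [hmem] at hk
    push_neg at hk
    simp [hk]
  have hone : ∀ k ∈ S, (1 : ℤ) ≤ x k * x k := by
    intro k hk
    rw [hmem] at hk
    rcases hk.lt_or_gt with h' | h' <;> nlinarith
  have hcard : (S.card : ℤ) ≤ 2 := by
    calc (S.card : ℤ) = ∑ _k ∈ S, (1 : ℤ) := by simp
    _ ≤ ∑ k ∈ S, x k * x k := Finset.sum_le_sum hone
    _ = 2 := hsum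
  have hcard' : S.card ≤ 2 := by exact_mod_cast hcard
  interval_cases hc : S.card
  · rw [Finset.card_eq_zero] at hc
    rw [hc] at hsum
    simp at hsum
  · rw [Finset.card_eq_one] at hc
    obtain ⟨i, hi⟩ := hc
    rw [hi, Finset.sum_singleton] at hsum
    exact absurd hsum (no_sq_two _)
  · rw [Finset.card_eq_two] at hc
    obtain ⟨i, j, hij, hS⟩ := hc
    rw [hS, Finset.sum_pair hij] at hsum
    have hi1 : (1:ℤ) ≤ x i * x i := hone i (by rw [hS]; simp)
    have hj1 : (1:ℤ) ≤ x j * x j := hone j (by rw [hS]; simp)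
    refine ⟨i, j, hij, by omega, by omega, ?_⟩
    intro k hki hkj
    by_contra hk
    have : k ∈ S := (hmem k).2 hk
    rw [hS] at this
    simp only [Finset.mem_insert, Finset.mem_singleton] at this
    tauto

private lemma side_lemma {m : ℕ} {i j : Fin m} (hij : i ≠ j) (c x : Fin m → ℤ)
    (hci : c i * c i = 1) (hcj : c j * c j = 1) (hc0 : ∀ k, k ≠ i → k ≠ j → c k = 0)
    (hx1 : ∀ k, x k ≠ 0 → x k * x k = 1)
    (hxc : ∑ k, x k * c k = -1) :
    (x i ≠ 0 ∧ x j = 0) ∨ (x j ≠ 0 ∧ x i = 0) := by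
  have hsum : x i * c i + x j * c j = -1 := by
    rw [← sum_mul_pair hij x c (fun k h1 h2 => by rw [hc0 k h1 h2, mul_zero])]
    exact hxc
  by_cases hxi : x i = 0
  · by_cases hxj : x j = 0
    · rw [hxi, hxj] at hsum; simp at hsum
    · exact Or.inr ⟨hxj, hxi⟩
  · by_cases hxj : x j = 0
    · exact Or.inl ⟨hxi, hxj⟩
    · exfalso
      have h1 : (x i * c i) * (x i * c i) = 1 := by
        linear_combination (c i * c i) * (hx1 i hxi) + hci
      have h2 : (x j * c j) * (x j * c j) = 1 := by
        linear_combination (c j * c j) * (hx1 j hxj) + hcj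
      rcases mul_self_eq_one_iff.mp h1 with h | h <;>
        rcases mul_self_eq_one_iff.mp h2 with h' | h' <;> omega

private lemma pair_lemma {m : ℕ} {i j : Fin m} (hij : i ≠ j) (c p q : Fin m → ℤ)
    (hci : c i * c i = 1) (hcj : c j * c j = 1) (hc0 : ∀ k, k ≠ i → k ≠ j → c k = 0)
    (hp : ∑ k, p k * p k = 2) (hq : ∑ k, q k * q k = 2)
    (hpc : ∑ k, p k * c k = -1) (hqc : ∑ k, q k * c k = -1)
    (hpq : ∑ k, p k * q k = 0)
    (hpi : p i ≠ 0) (hpj : p j = 0) (hqi : q i ≠ 0) (hqj : q j = 0) :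
    ∀ k, 2 ∣ p k + q k := by
  obtain ⟨i1, j1, hij1, hp1, hp2, hp0⟩ := norm_two_struct p hp
  obtain ⟨i2, j2, hij2, hq1, hq2, hq0⟩ := norm_two_struct q hq
  have hchoose : ∃ t, t ≠ i ∧ p t * p t = 1 ∧ p i * p i = 1 ∧
      ∀ k, k ≠ i → k ≠ t → p k = 0 := by
    by_cases h : i = i1
    · subst h
      exact ⟨j1, fun hh => hij1 hh.symm, hp2, hp1, hp0⟩
    · have hi : i = j1 := by
        by_contra hh
        exact hpi (hp0 i h hh)
      subst hi
      exact ⟨i1, fun hh => hij1 hh, hp1, hp2, fun k h1 h2 => hp0 k h2 h1⟩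
  obtain ⟨t, hti, hpt, hpii, hpsupp⟩ := hchoose
  have hchooseq : ∃ s, s ≠ i ∧ q s * q s = 1 ∧ q i * q i = 1 ∧
      ∀ k, k ≠ i → k ≠ s → q k = 0 := by
    by_cases h : i = i2
    · subst h
      exact ⟨j2, fun hh => hij2 hh.symm, hq2, hq1, hq0⟩
    · have hi : i = j2 := by
        by_contra hh
        exact hqi (hq0 i h hh)
      subst hi
      exact ⟨i2, fun hh => hij2 hh, hq1, hq2, fun k h1 h2 => hq0 k h2 h1⟩
  obtain ⟨s, hsi, hqs, hqii, hqsupp⟩ := hchooseq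
  have htj : t ≠ j := by intro hh; rw [hh] at hpt; rw [hpj] at hpt; simp at hpt
  have hsj : s ≠ j := by intro hh; rw [hh] at hqs; rw [hqj] at hqs; simp at hqs
  have hit : i ≠ t := fun hh => hti hh.symm
  have his : i ≠ s := fun hh => hsi hh.symm
  have hpci : p i * c i = -1 := by
    have e := sum_mul_pair hit p c (fun k h1 h2 => by rw [hpsupp k h1 h2, zero_mul])
    rw [hpc, hc0 t hti htj, mul_zero] at e
    omega
  have hqci : q i * c i = -1 := by
    have e := sum_mul_pair his q c (fun k h1 h2 => by rw [hqsupp k h1 h2, zero_mul])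
    rw [hqc, hc0 s hsi hsj, mul_zero] at e
    omega
  have hcine : c i ≠ 0 := by intro hh; rw [hh] at hci; simp at hci
  have hpiqi : p i = q i := by
    have hz : (p i - q i) * c i = 0 := by linear_combination hpci - hqci
    rcases mul_eq_zero.mp hz with h | h
    · omega
    · exact absurd h hcine
  have hpiqi2 : p i * q i = 1 := by rw [← hpiqi]; exact hpii
  have hptqt : p t * q t = -1 := by
    have e := sum_mul_pair hit p q (fun k h1 h2 => by rw [hpsupp k h1 h2, zero_mul])
    rw [hpq] at e
    omega
  have hts : s = t := by
    by_contra hh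
    rw [hqsupp t hti (fun hh2 => hh hh2.symm), mul_zero] at hptqt
    omega
  subst hts
  have hptne : p s ≠ 0 := by intro hh; rw [hh] at hpt; simp at hpt
  have hqtneg : q s = -p s := by
    have hz : p s * (q s + p s) = 0 := by linear_combination hptqt + hpt
    rcases mul_eq_zero.mp hz with h | h
    · exact absurd h hptne
    · omega
  intro k
  by_cases hk1 : k = i
  · subst hk1; rw [← hpiqi]; exact ⟨p k, by ring⟩
  · by_cases hk2 : k = s
    · subst hk2; rw [hqtneg]; exact ⟨0, by ring⟩
    · rw [hpsupp k hk1 hk2, hqsupp k hk1 hk2]; exact ⟨0, by ring⟩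

private lemma key_lemma {m : ℕ} (c p q r : Fin m → ℤ)
    (hc : ∑ k, c k * c k = 2) (hp : ∑ k, p k * p k = 2)
    (hq : ∑ k, q k * q k = 2) (hr : ∑ k, r k * r k = 2)
    (hpc : ∑ k, p k * c k = -1) (hqc : ∑ k, q k * c k = -1) (hrc : ∑ k, r k * c k = -1)
    (hpq : ∑ k, p k * q k = 0) (hpr : ∑ k, p k * r k = 0) (hqr : ∑ k, q k * r k = 0) :
    (∀ k, 2 ∣ p k + q k) ∨ (∀ k, 2 ∣ p k + r k) ∨ (∀ k, 2 ∣ q k + r k) := by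
  obtain ⟨i, j, hij, hci, hcj, hc0⟩ := norm_two_struct c hc
  have hone : ∀ x : Fin m → ℤ, (∑ k, x k * x k = 2) → ∀ k, x k ≠ 0 → x k * x k = 1 := by
    intro x hx k hk
    obtain ⟨i1, j1, hij1, h1, h2, h0⟩ := norm_two_struct x hx
    by_cases hki : k = i1
    · subst hki; exact h1
    · by_cases hkj : k = j1
      · subst hkj; exact h2
      · exact absurd (h0 k hki hkj) hk
  have sp := side_lemma hij c p hci hcj hc0 (hone p hp) hpc
  have sq := side_lemma hij c q hci hcj hc0 (hone q hq) hqc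
  have sr := side_lemma hij c r hci hcj hc0 (hone r hr) hrc
  have hc0' : ∀ k, k ≠ j → k ≠ i → c k = 0 := fun k h1 h2 => hc0 k h2 h1
  rcases sp with ⟨hpi, hpj⟩ | ⟨hpj, hpi⟩ <;> rcases sq with ⟨hqi, hqj⟩ | ⟨hqj, hqi⟩ <;>
    rcases sr with ⟨hri, hrj⟩ | ⟨hrj, hri⟩
  · exact Or.inl (pair_lemma hij c p q hci hcj hc0 hp hq hpc hqc hpq hpi hpj hqi hqj)
  · exact Or.inl (pair_lemma hij c p q hci hcj hc0 hp hq hpc hqc hpq hpi hpj hqi hqj)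
  · exact Or.inr (Or.inl (pair_lemma hij c p r hci hcj hc0 hp hr hpc hrc hpr hpi hpj hri hrj))
  · exact Or.inr (Or.inr (pair_lemma hij.symm c q r hcj hci hc0' hq hr hqc hrc hqr hqj hqi hrj hri))
  · exact Or.inr (Or.inr (pair_lemma hij c q r hci hcj hc0 hq hr hqc hrc hqr hqi hqj hri hrj))
  · exact Or.inr (Or.inl (pair_lemma hij.symm c p r hcj hci hc0' hp hr hpc hrc hpr hpj hpi hrj hri))
  · exact Or.inl (pair_lemma hij.symm c p q hcj hci hc0' hp hq hpc hqc hpq hpj hpi hqj hqi)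
  · exact Or.inl (pair_lemma hij.symm c p q hcj hci hc0' hp hq hpc hqc hpq hpj hpi hqj hqi)
private lemma parity_contra {m : ℕ} (u x y : Fin m → ℤ) (hev : ∀ k, 2 ∣ x k + y k)
    (hx : ∑ k, u k * x k = -1) (hy : ∑ k, u k * y k = 0) : False := by
  have h1 : ∑ k, (u k * x k + u k * y k) = -1 := by
    rw [Finset.sum_add_distrib, hx, hy]; norm_num
  have h2 : (2:ℤ) ∣ ∑ k, (u k * x k + u k * y k) := by
    apply Finset.dvd_sum
    intro k _
    have : u k * x k + u k * y k = u k * (x k + y k) := by ring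
    rw [this]
    exact Dvd.dvd.mul_left (hev k) (u k)
  rw [h1] at h2
  norm_num at h2

theorem plumbing_lattice_no_embedding (n a : ℤ) (hn : 1 ≤ n) (ha : 2 ≤ a) :
    ¬ ∃ (m : ℕ) (φ : (Fin 6 → ℤ) →ₗ[ℤ] (Fin m → ℤ)),
      ∀ x y : Fin 6 → ℤ,
        (∑ k, φ x k * φ y k) =
          -(x ⬝ᵥ (Matrix.mulVec
            !![-(n + 1), 1, 0, 0, 0, 0;
               1, -2, 1, 0, 0, 0;
               0, 1, -2, 1, 0, 1;
               0, 0, 1, -2, 1, 0;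
               0, 0, 0, 1, -a, 0;
               0, 0, 1, 0, 0, -2] y)) := by
  rintro ⟨m, φ, h⟩
  have g11 : ∑ k, φ (Pi.single 1 1) k * φ (Pi.single 1 1) k = 2 := by
    simpa [Matrix.mulVec_single, single_dotProduct] using h (Pi.single 1 1) (Pi.single 1 1)
  have g22 : ∑ k, φ (Pi.single 2 1) k * φ (Pi.single 2 1) k = 2 := by
    simpa [Matrix.mulVec_single, single_dotProduct] using h (Pi.single 2 1) (Pi.single 2 1)
  have g33 : ∑ k, φ (Pi.single 3 1) k * φ (Pi.single 3 1) k = 2 := by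
    simpa [Matrix.mulVec_single, single_dotProduct] using h (Pi.single 3 1) (Pi.single 3 1)
  have g55 : ∑ k, φ (Pi.single 5 1) k * φ (Pi.single 5 1) k = 2 := by
    simpa [Matrix.mulVec_single, single_dotProduct] using h (Pi.single 5 1) (Pi.single 5 1)
  have g12 : ∑ k, φ (Pi.single 1 1) k * φ (Pi.single 2 1) k = -1 := by
    simpa [Matrix.mulVec_single, single_dotProduct] using h (Pi.single 1 1) (Pi.single 2 1)
  have g32 : ∑ k, φ (Pi.single 3 1) k * φ (Pi.single 2 1) k = -1 := by
    simpa [Matrix.mulVec_single, single_dotProduct] using h (Pi.single 3 1) (Pi.single 2 1)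
  have g52 : ∑ k, φ (Pi.single 5 1) k * φ (Pi.single 2 1) k = -1 := by
    simpa [Matrix.mulVec_single, single_dotProduct] using h (Pi.single 5 1) (Pi.single 2 1)
  have g13 : ∑ k, φ (Pi.single 1 1) k * φ (Pi.single 3 1) k = 0 := by
    simpa [Matrix.mulVec_single, single_dotProduct] using h (Pi.single 1 1) (Pi.single 3 1)
  have g15 : ∑ k, φ (Pi.single 1 1) k * φ (Pi.single 5 1) k = 0 := by
    simpa [Matrix.mulVec_single, single_dotProduct] using h (Pi.single 1 1) (Pi.single 5 1)
  have g35 : ∑ k, φ (Pi.single 3 1) k * φ (Pi.single 5 1) k = 0 := by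
    simpa [Matrix.mulVec_single, single_dotProduct] using h (Pi.single 3 1) (Pi.single 5 1)
  have g01 : ∑ k, φ (Pi.single 0 1) k * φ (Pi.single 1 1) k = -1 := by
    simpa [Matrix.mulVec_single, single_dotProduct] using h (Pi.single 0 1) (Pi.single 1 1)
  have g03 : ∑ k, φ (Pi.single 0 1) k * φ (Pi.single 3 1) k = 0 := by
    simpa [Matrix.mulVec_single, single_dotProduct] using h (Pi.single 0 1) (Pi.single 3 1)
  have g43 : ∑ k, φ (Pi.single 4 1) k * φ (Pi.single 3 1) k = -1 := by
    simpa [Matrix.mulVec_single, single_dotProduct] using h (Pi.single 4 1) (Pi.single 3 1)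
  have g41 : ∑ k, φ (Pi.single 4 1) k * φ (Pi.single 1 1) k = 0 := by
    simpa [Matrix.mulVec_single, single_dotProduct] using h (Pi.single 4 1) (Pi.single 1 1)
  have g45 : ∑ k, φ (Pi.single 4 1) k * φ (Pi.single 5 1) k = 0 := by
    simpa [Matrix.mulVec_single, single_dotProduct] using h (Pi.single 4 1) (Pi.single 5 1)
  rcases key_lemma (φ (Pi.single 2 1)) (φ (Pi.single 1 1)) (φ (Pi.single 3 1)) (φ (Pi.single 5 1))
      g22 g11 g33 g55 g12 g32 g52 g13 g15 g35 with hev | hev | hev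
  · exact parity_contra (φ (Pi.single 0 1)) _ _ hev g01 g03
  · have g05 : ∑ k, φ (Pi.single 0 1) k * φ (Pi.single 5 1) k = 0 := by
      simpa [Matrix.mulVec_single, single_dotProduct] using h (Pi.single 0 1) (Pi.single 5 1)
    exact parity_contra (φ (Pi.single 0 1)) _ _ hev g01 g05
  · exact parity_contra (φ (Pi.single 4 1)) _ _ hev g43 g45
end

section
/- There do not exist vectors a, b, c, d, u, v ∈ ℤ^m (standard dot product) satisfying: a·a = b·b = c·c = d·d = 2; |a·b| = |b·c| = |b·d| = 1; a·c = a·d = c·d = 0; |u·a| = 1 and u·b = u·c = u·d = 0; |v·c| = 1 and v·a = v·b = v·d = 0. -/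
open Finset

private lemma one_le_sq' {n : ℤ} (h : n ≠ 0) : 1 ≤ n * n := by
  rcases h.lt_or_gt with h | h <;> nlinarith

private lemma entry_bound' {m : ℕ} (x : Fin m → ℤ) (hx : ∑ k, x k * x k = 2) (i : Fin m) :
    x i * x i ≤ 2 := by
  calc x i * x i ≤ ∑ k, x k * x k :=
        Finset.single_le_sum (f := fun k => x k * x k) (fun k _ => mul_self_nonneg _)
          (mem_univ i)
    _ = 2 := hx

private lemma sq_eq_one' {m : ℕ} (x : Fin m → ℤ) (hx : ∑ k, x k * x k = 2) (i : Fin m)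
    (hi : x i ≠ 0) : x i * x i = 1 := by
  have hb := entry_bound' x hx i
  have h2 : 2 ≤ x i ∨ x i ≤ -2 ∨ x i = 1 ∨ x i = -1 := by omega
  rcases h2 with h2 | h2 | h2 | h2
  · nlinarith
  · nlinarith
  · rw [h2]; ring
  · rw [h2]; ring

private lemma shares' {m : ℕ} (x y : Fin m → ℤ) (h : |∑ k, x k * y k| = 1) :
    ∃ i, x i ≠ 0 ∧ y i ≠ 0 := by
  have hne : ∑ k, x k * y k ≠ 0 := by
    intro h0; rw [h0] at h; simp at h
  obtain ⟨i, _, hi⟩ := Finset.exists_ne_zero_of_sum_ne_zero hne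
  exact ⟨i, left_ne_zero_of_mul hi, right_ne_zero_of_mul hi⟩

private lemma parity' {m : ℕ} (x y w : Fin m → ℤ)
    (hx : ∑ k, x k * x k = 2) (hy : ∑ k, y k * y k = 2)
    (hxy : ∑ k, x k * y k = 0) (i : Fin m) (hxi : x i ≠ 0) (hyi : y i ≠ 0) :
    Even (∑ k, w k * x k + ∑ k, w k * y k) := by
  have hxi2 : x i * x i = 1 := sq_eq_one' x hx i hxi
  have hyi2 : y i * y i = 1 := sq_eq_one' y hy i hyi
  set ε : ℤ := x i * y i with hε_def
  have hε2 : ε * ε = 1 := by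
    have : ε * ε = (x i * x i) * (y i * y i) := by rw [hε_def]; ring
    rw [this, hxi2, hyi2]; ring
  have hε : ε = 1 ∨ ε = -1 := mul_self_eq_one_iff.mp hε2
  -- the vector z = x + ε y has norm 4 and z i = 2 x i, so z is supported at i only
  have hz : ∑ k, (x k + ε * y k) * (x k + ε * y k) = 4 := by
    have he : ∀ k, (x k + ε * y k) * (x k + ε * y k)
        = x k * x k + (2 * ε) * (x k * y k) + (ε * ε) * (y k * y k) := fun k => by ring
    simp_rw [he]
    rw [Finset.sum_add_distrib, Finset.sum_add_distrib, ← Finset.mul_sum, ← Finset.mul_sum,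
      hx, hy, hxy, hε2]
    ring
  have hzi : x i + ε * y i = 2 * x i := by
    have h1 : ε * y i = x i * (y i * y i) := by rw [hε_def]; ring
    rw [h1, hyi2]; ring
  have hzi2 : (x i + ε * y i) * (x i + ε * y i) = 4 := by
    rw [hzi]; linear_combination (4 : ℤ) * hxi2
  have hsum0 : ∑ k ∈ univ.erase i, (x k + ε * y k) * (x k + ε * y k) = 0 := by
    have h1 := Finset.sum_erase_add univ
      (fun k => (x k + ε * y k) * (x k + ε * y k)) (mem_univ i)
    simp only [hzi2] at h1
    rw [hz] at h1
    linarith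
  have hrest : ∀ k ∈ univ.erase i, x k + ε * y k = 0 := by
    intro k hk
    have := (Finset.sum_eq_zero_iff_of_nonneg
      (fun k _ => mul_self_nonneg (x k + ε * y k))).mp hsum0 k hk
    exact mul_self_eq_zero.mp this
  have hdot : ∑ k, w k * x k + ε * ∑ k, w k * y k = 2 * (w i * x i) := by
    have h1 : ∑ k, w k * x k + ε * ∑ k, w k * y k = ∑ k, w k * (x k + ε * y k) := by
      rw [Finset.mul_sum, ← Finset.sum_add_distrib]
      exact Finset.sum_congr rfl fun k _ => by ring
    rw [h1, ← Finset.sum_erase_add _ _ (mem_univ i)]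
    rw [Finset.sum_eq_zero fun k hk => by rw [hrest k hk, mul_zero]]
    rw [hzi]; ring
  rcases hε with hε1 | hε1
  · rw [hε1, one_mul] at hdot
    exact ⟨w i * x i, by linarith⟩
  · rw [hε1] at hdot
    exact ⟨w i * x i + ∑ k, w k * y k, by linarith⟩

private lemma odd_contra' {s : ℤ} (h : |s| = 1) (he : Even s) : False := by
  rcases abs_eq (by norm_num : (0:ℤ) ≤ 1) |>.mp h with h1 | h1 <;>
    · obtain ⟨r, hr⟩ := he; omega

theorem no_star_configuration (m : ℕ) :
    ¬ ∃ a b c d u v : Fin m → ℤ,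
      (∑ k, a k * a k = 2) ∧ (∑ k, b k * b k = 2) ∧
      (∑ k, c k * c k = 2) ∧ (∑ k, d k * d k = 2) ∧
      |∑ k, a k * b k| = 1 ∧ |∑ k, b k * c k| = 1 ∧ |∑ k, b k * d k| = 1 ∧
      (∑ k, a k * c k = 0) ∧ (∑ k, a k * d k = 0) ∧ (∑ k, c k * d k = 0) ∧
      |∑ k, u k * a k| = 1 ∧
      (∑ k, u k * b k = 0) ∧ (∑ k, u k * c k = 0) ∧ (∑ k, u k * d k = 0) ∧
      |∑ k, v k * c k| = 1 ∧
      (∑ k, v k * a k = 0) ∧ (∑ k, v k * b k = 0) ∧ (∑ k, v k * d k = 0) := by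
  rintro ⟨a, b, c, d, u, v, haa, hbb, hcc, hdd, hab, hbc, hbd, hac, had, hcd,
    hua, hub, huc, hud, hvc, hva, hvb, hvd⟩
  obtain ⟨ia, hai, hbia⟩ := shares' a b hab
  obtain ⟨ic, hbic, hci⟩ := shares' b c hbc
  obtain ⟨id', hbid, hdi⟩ := shares' b d hbd
  by_cases h1 : ia = ic
  · -- a and c share a nonzero coordinate
    have hpar := parity' a c u haa hcc hac ia hai (h1 ▸ hci)
    rw [huc, add_zero] at hpar
    exact odd_contra' hua hpar
  by_cases h2 : ia = id'
  · have hpar := parity' a d u haa hdd had ia hai (h2 ▸ hdi)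
    rw [hud, add_zero] at hpar
    exact odd_contra' hua hpar
  by_cases h3 : ic = id'
  · have hpar := parity' c d v hcc hdd hcd ic hci (h3 ▸ hdi)
    rw [hvd, add_zero] at hpar
    exact odd_contra' hvc hpar
  -- b is nonzero at three distinct indices: impossible for a norm-2 vector
  have hsub : ∑ k ∈ ({ia, ic, id'} : Finset (Fin m)), b k * b k ≤ 2 := by
    rw [← hbb]
    exact Finset.sum_le_sum_of_subset_of_nonneg (subset_univ _)
      (fun k _ _ => mul_self_nonneg _)
  have hge : 3 ≤ ∑ k ∈ ({ia, ic, id'} : Finset (Fin m)), b k * b k := by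
    rw [Finset.sum_insert (by simp [h1, h2]), Finset.sum_insert (by simp [h3]),
      Finset.sum_singleton]
    have g1 := one_le_sq' hbia
    have g2 := one_le_sq' hbic
    have g3 := one_le_sq' hbid
    linarith
  linarith
end
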